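/- Let μ0 be a Borel probability measure on X0 ⊆ X, and suppose for each z in the support of μ0 one is given T_z ∈ [0,T_M], a Borel measurable control u_z : [0,T_z] → U and an absolutely continuous trajectory x_z : [0,T_z] → X with x_z(0) = z, x_z(T_z) ∈ X_T and x_z'(t) = f(x_z(t),u_z(t)) a.e., with z ↦ T_z Borel measurable and (z,t) ↦ (x_z(t),u_z(t)) Borel measurable. Let μ and μ_T be the associated occupation and terminal measures: μ(A×B) := ∫_{X0} (∫_0^{T_z} 1[x_z(t) ∈ A, u_z(t) ∈ B] dt) dμ0(z) and μ_T(A) := ∫_{X0} 1[x_z(T_z) ∈ A] dμ0(z). If l ∈ IOCP(μ,μ_T), then for μ0-almost every z the trajectory (x_z,u_z) is optimal for the classical direct problem from z: for every S ∈ [0,T_M], every Borel measurable control ũ : [0,S] → U and every absolutely continuous x̃ : [0,S] → X with x̃(0) = z, x̃(S) ∈ X_T and x̃'(t) = f(x̃(t),ũ(t)) a.e., one has ∫_0^{T_z} l(x_z(t),u_z(t)) dt ≤ ∫_0^S l(x̃(t),ũ(t)) dt. -/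

import Mathlib

open MeasureTheory

noncomputable section

/-- `l ∈ IOCP_ε(μ, μT)`: there is a `C¹` certificate `v` with
`⟨μ, l + ∇v·f⟩ ≤ ε`, `l + ∇v·f + ε ≥ 0` on `X × U`, `⟨μT, v⟩ ≥ −ε` and `v ≤ 0` on `X_T`. -/
def IOCPe {n m : ℕ} (X : Set (EuclideanSpace ℝ (Fin n)))
    (U : Set (EuclideanSpace ℝ (Fin m))) (XT : Set (EuclideanSpace ℝ (Fin n)))
    (f : EuclideanSpace ℝ (Fin n) × EuclideanSpace ℝ (Fin m) → EuclideanSpace ℝ (Fin n))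
    (μ : Measure (EuclideanSpace ℝ (Fin n) × EuclideanSpace ℝ (Fin m)))
    (μT : Measure (EuclideanSpace ℝ (Fin n)))
    (ε : ℝ) (l : EuclideanSpace ℝ (Fin n) × EuclideanSpace ℝ (Fin m) → ℝ) : Prop :=
  ∃ v : EuclideanSpace ℝ (Fin n) → ℝ, ContDiff ℝ 1 v ∧
    (∫ p, (l p + fderiv ℝ v p.1 (f p)) ∂μ) ≤ ε ∧
    (∀ p ∈ X ×ˢ U, 0 ≤ l p + fderiv ℝ v p.1 (f p) + ε) ∧
    (-ε ≤ ∫ x, v x ∂μT) ∧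
    (∀ x ∈ XT, v x ≤ 0)

/-- The set of solutions of the inverse optimal control problem: continuous Lagrangians
belonging to `IOCP_ε(μ, μT)` for every `ε > 0`. -/
def IOCP {n m : ℕ} (X : Set (EuclideanSpace ℝ (Fin n)))
    (U : Set (EuclideanSpace ℝ (Fin m))) (XT : Set (EuclideanSpace ℝ (Fin n)))
    (f : EuclideanSpace ℝ (Fin n) × EuclideanSpace ℝ (Fin m) → EuclideanSpace ℝ (Fin n))
    (μ : Measure (EuclideanSpace ℝ (Fin n) × EuclideanSpace ℝ (Fin m)))
    (μT : Measure (EuclideanSpace ℝ (Fin n))) :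
    Set (EuclideanSpace ℝ (Fin n) × EuclideanSpace ℝ (Fin m) → ℝ) :=
  {l | ContinuousOn l (X ×ˢ U) ∧ ∀ ε : ℝ, 0 < ε → IOCPe X U XT f μ μT ε l}

/-- The (topological) support of a measure. -/
def msupport {α : Type*} [TopologicalSpace α] [MeasurableSpace α] (ν : Measure α) :
    Set α := {x | ∀ s ∈ nhds x, ν s ≠ 0}

open Set

section auxlemmas
lemma msupport_compl_null {α : Type*} [TopologicalSpace α] [MeasurableSpace α]
    [SecondCountableTopology α] (ν : Measure α) :
    ν (msupport ν)ᶜ = 0 := by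
  classical
  set B : Set (Set α) := {s ∈ TopologicalSpace.countableBasis α | ν s = 0} with hB
  have hBc : B.Countable :=
    (TopologicalSpace.countable_countableBasis α).mono (sep_subset _ _)
  have hcover : (msupport ν)ᶜ ⊆ ⋃₀ B := by
    intro x hx
    simp only [msupport, mem_compl_iff, mem_setOf_eq, not_forall] at hx
    obtain ⟨s, hs, hνs⟩ := hx
    have hνs0 : ν s = 0 := by simpa using hνs
    obtain ⟨t, htB, hxt, hts⟩ :=
      (TopologicalSpace.isBasis_countableBasis α).mem_nhds_iff.mp hs
    exact ⟨t, ⟨htB, le_antisymm (hνs0 ▸ measure_mono hts) (zero_le)⟩, hxt⟩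
  refine measure_mono_null hcover ?_
  rw [sUnion_eq_biUnion]
  exact (measure_biUnion_null_iff hBc).mpr (fun s hs => hs.2)


variable {n m : ℕ}


lemma integrableOn_comp_traj {X : Set (EuclideanSpace ℝ (Fin n))}
    {U : Set (EuclideanSpace ℝ (Fin m))} (hX : IsCompact X) (hU : IsCompact U)
    {S : ℝ} {x : ℝ → EuclideanSpace ℝ (Fin n)} {u : ℝ → EuclideanSpace ℝ (Fin m)}
    (hxc : ContinuousOn x (Icc 0 S)) (hu : Measurable u)
    (hmem : ∀ t ∈ Icc 0 S, x t ∈ X ∧ u t ∈ U)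
    {G : EuclideanSpace ℝ (Fin n) × EuclideanSpace ℝ (Fin m) → ℝ} (hG : Continuous G) :
    IntegrableOn (fun t => G (x t, u t)) (Icc 0 S) volume := by
  obtain ⟨Bd, hBd⟩ := (hX.prod hU).exists_bound_of_continuousOn hG.continuousOn
  have hmeas : AEStronglyMeasurable (fun t => G (x t, u t)) (volume.restrict (Icc 0 S)) := by
    have h1 : AEStronglyMeasurable x (volume.restrict (Icc 0 S)) :=
      hxc.aestronglyMeasurable measurableSet_Icc
    have h2 : AEStronglyMeasurable u (volume.restrict (Icc 0 S)) :=
      hu.aestronglyMeasurable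
    exact hG.comp_aestronglyMeasurable (h1.prodMk h2)
  refine Integrable.mono' (g := fun _ => Bd) (integrableOn_const ?_) hmeas ?_
  · simp [Real.volume_Icc]
  · refine (ae_restrict_iff' measurableSet_Icc).mpr (ae_of_all _ fun t ht => ?_)
    exact hBd _ (mk_mem_prod (hmem t ht).1 (hmem t ht).2)

lemma traj_basic {X : Set (EuclideanSpace ℝ (Fin n))} {U : Set (EuclideanSpace ℝ (Fin m))}
    {f : EuclideanSpace ℝ (Fin n) × EuclideanSpace ℝ (Fin m) → EuclideanSpace ℝ (Fin n)}
    (hf : Continuous f) {C : ℝ} (hC : ∀ p ∈ X ×ˢ U, ‖f p‖ ≤ C) (hCpos : 0 < C)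
    {S : ℝ} (hS : 0 ≤ S) {x : ℝ → EuclideanSpace ℝ (Fin n)}
    {u : ℝ → EuclideanSpace ℝ (Fin m)} (hu : Measurable u)
    (hmem : ∀ t ∈ Icc 0 S, x t ∈ X ∧ u t ∈ U)
    (hx : ∀ t ∈ Icc 0 S, x t = x 0 + ∫ s in Icc 0 t, f (x s, u s)) :
    IntegrableOn (fun s => f (x s, u s)) (Icc 0 S) volume ∧
    (∀ a b, 0 ≤ a → a ≤ b → b ≤ S →
      x b - x a = ∫ s in Ioc a b, f (x s, u s)) ∧
    ContinuousOn x (Icc 0 S) := by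
  classical
  set g : ℝ → EuclideanSpace ℝ (Fin n) := fun s => f (x s, u s) with hg
  have hgC : ∀ s ∈ Icc 0 S, ‖g s‖ ≤ C := fun s hs =>
    hC _ (mk_mem_prod (hmem s hs).1 (hmem s hs).2)
  -- the set of good times
  set A : Set ℝ := {t | t ∈ Icc 0 S ∧ AEMeasurable g (volume.restrict (Icc 0 t))} with hA
  have h0A : (0:ℝ) ∈ A := by
    refine ⟨⟨le_refl 0, hS⟩, ?_⟩
    have : volume.restrict (Icc (0:ℝ) 0) = 0 := by
      rw [Measure.restrict_eq_zero, Icc_self]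
      exact measure_singleton 0
    rw [this]
    exact aemeasurable_zero_measure
  have hmono : ∀ a ∈ A, ∀ b, 0 ≤ b → b ≤ a → b ∈ A := by
    intro a ha b hb0 hba
    exact ⟨⟨hb0, hba.trans ha.1.2⟩,
      ha.2.mono_measure (Measure.restrict_mono (Icc_subset_Icc_right hba) le_rfl)⟩
  have hbdd : BddAbove A := ⟨S, fun a ha => ha.1.2⟩
  set τ := sSup A with hτ
  have hτ0 : 0 ≤ τ := le_csSup hbdd h0A
  have hτS : τ ≤ S := csSup_le ⟨0, h0A⟩ fun a ha => ha.1.2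
  -- a.e. measurability on [0, τ)
  have hIco : AEMeasurable g (volume.restrict (Ico 0 τ)) := by
    rcases eq_or_lt_of_le hτ0 with h0 | h0
    · rw [← h0]
      simp only [Ico_self]
      rw [Measure.restrict_empty]
      exact aemeasurable_zero_measure
    · have hIcoU : Ico 0 τ = ⋃ k : ℕ, Icc 0 (τ - τ / (k + 1)) := by
        ext s
        simp only [mem_Ico, mem_iUnion, mem_Icc]
        constructor
        · rintro ⟨hs0, hsτ⟩
          obtain ⟨k, hk⟩ := exists_nat_gt (τ / (τ - s))
          refine ⟨k, hs0, ?_⟩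
          have hτs : 0 < τ - s := by linarith
          have hk1 : τ / (τ - s) < (k : ℝ) + 1 := by
            calc τ / (τ - s) < (k : ℝ) := hk
            _ ≤ k + 1 := by linarith
          have hkp : (0:ℝ) < (k:ℝ) + 1 := by positivity
          have : τ / ((k:ℝ) + 1) < τ - s := by
            rw [div_lt_iff₀ hkp]
            have := (div_lt_iff₀ hτs).mp hk1
            linarith [this]
          linarith
        · rintro ⟨k, hs0, hsk⟩
          have hkp : (0:ℝ) < (k:ℝ) + 1 := by positivity
          have : 0 < τ / ((k:ℝ) + 1) := by positivity
          exact ⟨hs0, by linarith⟩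
      rw [hIcoU]
      rw [aemeasurable_iUnion_iff]
      intro k
      have hkp : (0:ℝ) < (k:ℝ) + 1 := by positivity
      have hlt : τ - τ / (k + 1) < τ := by
        have : 0 < τ / ((k:ℝ) + 1) := by positivity
        linarith
      rcases le_or_gt 0 (τ - τ / (k + 1)) with hpos | hneg
      · obtain ⟨a, haA, halt⟩ := exists_lt_of_lt_csSup ⟨0, h0A⟩ hlt
        exact (hmono a haA _ hpos halt.le).2
      · have : Icc (0:ℝ) (τ - τ / (k+1)) = ∅ := Icc_eq_empty_of_lt hneg
        rw [this, Measure.restrict_empty]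
        exact aemeasurable_zero_measure
  -- on (τ, S] the trajectory is constant
  have hconst : ∀ t, τ < t → t ≤ S → x t = x 0 := by
    intro t hτt htS
    have htA : t ∉ A := fun h => absurd (le_csSup hbdd h) (not_le.mpr hτt)
    have ht0 : 0 ≤ t := hτ0.trans hτt.le
    have hnm : ¬ AEMeasurable g (volume.restrict (Icc 0 t)) := by
      intro h; exact htA ⟨⟨ht0, htS⟩, h⟩
    have : ¬ IntegrableOn g (Icc 0 t) volume := by
      intro h
      exact hnm (aestronglyMeasurable_iff_aemeasurable.mp h.1)
    rw [hx t ⟨ht0, htS⟩, integral_undef this, add_zero]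
  -- a.e. measurability on (τ, S]
  have hIoc : AEMeasurable g (volume.restrict (Ioc τ S)) := by
    have hmeas' : Measurable fun s => f (x 0, u s) :=
      hf.measurable.comp (measurable_const.prodMk hu)
    refine hmeas'.aemeasurable.congr ?_
    refine ((ae_restrict_iff' measurableSet_Ioc).mpr (ae_of_all _ fun s hs => ?_))
    simp only [hg, hconst s hs.1 hs.2]
  -- full a.e. measurability
  have hgm : AEMeasurable g (volume.restrict (Icc 0 S)) := by
    have hsub : Icc 0 S ⊆ Ico 0 τ ∪ ({τ} ∪ Ioc τ S) := by
      intro t ht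
      rcases lt_trichotomy t τ with h | h | h
      · exact Or.inl ⟨ht.1, h⟩
      · exact Or.inr (Or.inl (by simp [h]))
      · exact Or.inr (Or.inr ⟨h, ht.2⟩)
    have hsing : AEMeasurable g (volume.restrict {τ}) := by
      have : volume.restrict ({τ} : Set ℝ) = 0 := by
        rw [Measure.restrict_eq_zero]; exact measure_singleton τ
      rw [this]; exact aemeasurable_zero_measure
    have hun : AEMeasurable g (volume.restrict (Ico 0 τ ∪ ({τ} ∪ Ioc τ S))) := by
      rw [aemeasurable_union_iff]
      exact ⟨hIco, by rw [aemeasurable_union_iff]; exact ⟨hsing, hIoc⟩⟩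
    exact hun.mono_measure (Measure.restrict_mono hsub le_rfl)
  have hint : IntegrableOn g (Icc 0 S) volume := by
    refine Integrable.mono' (g := fun _ => C)
      (integrableOn_const (by simp [Real.volume_Icc])) ?_
      ((ae_restrict_iff' measurableSet_Icc).mpr (ae_of_all _ hgC))
    exact hgm.aestronglyMeasurable
  have hinc : ∀ a b, 0 ≤ a → a ≤ b → b ≤ S → x b - x a = ∫ s in Ioc a b, g s := by
    intro a b ha hab hbS
    have haI : a ∈ Icc 0 S := ⟨ha, hab.trans hbS⟩
    have hbI : b ∈ Icc 0 S := ⟨ha.trans hab, hbS⟩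
    have hsplit : ∫ s in Icc 0 b, g s = (∫ s in Icc 0 a, g s) + ∫ s in Ioc a b, g s := by
      rw [← setIntegral_union ((Iic_disjoint_Ioc le_rfl).mono Icc_subset_Iic_self le_rfl) measurableSet_Ioc
        (hint.mono_set (Icc_subset_Icc_right haI.2)) (hint.mono_set ?_),
        Icc_union_Ioc_eq_Icc ha hab]
      exact Ioc_subset_Icc_self.trans (Icc_subset_Icc ha hbS)
    rw [hx b hbI, hx a haI, hsplit]
    abel
  refine ⟨hint, hinc, ?_⟩
  have hlip : LipschitzOnWith (Real.toNNReal C) x (Icc 0 S) := by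
    rw [lipschitzOnWith_iff_dist_le_mul]
    intro p hp q hq
    wlog hpq : q ≤ p generalizing p q
    · rw [dist_comm, dist_comm p q]
      exact this q hq p hp (le_of_not_ge hpq)
    have hd : x p - x q = ∫ s in Ioc q p, g s := hinc q p hq.1 hpq hp.2
    have : dist (x p) (x q) ≤ C * (p - q) := by
      rw [dist_eq_norm, hd]
      calc ‖∫ s in Ioc q p, g s‖ ≤ C * (volume (Ioc q p)).toReal := by
            refine norm_setIntegral_le_of_norm_le_const ?_ ?_
            · simp [Real.volume_Ioc]
            · intro s hs
              exact hgC s ⟨hq.1.trans hs.1.le, hs.2.trans hp.2⟩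
        _ = C * (p - q) := by rw [Real.volume_Ioc, ENNReal.toReal_ofReal (by linarith)]
    rw [Real.dist_eq, abs_of_nonneg (by linarith)]
    calc dist (x p) (x q) ≤ C * (p - q) := this
      _ ≤ Real.toNNReal C * (p - q) := by
          have : (Real.toNNReal C : ℝ) = C := Real.coe_toNNReal _ hCpos.le
          rw [this]
  exact hlip.continuousOn

lemma ftc_traj {v : EuclideanSpace ℝ (Fin n) → ℝ} (hv : ContDiff ℝ 1 v)
    {x : ℝ → EuclideanSpace ℝ (Fin n)} {g : ℝ → EuclideanSpace ℝ (Fin n)} {T C : ℝ}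
    (hT : 0 ≤ T) (hCpos : 0 < C)
    (hg : IntegrableOn g (Icc 0 T) volume)
    (hgC : ∀ s ∈ Icc 0 T, ‖g s‖ ≤ C)
    (hxc : ContinuousOn x (Icc 0 T))
    (hinc : ∀ a b, 0 ≤ a → a ≤ b → b ≤ T → x b - x a = ∫ s in Ioc a b, g s) :
    ∫ s in Icc 0 T, (fderiv ℝ v (x s)) (g s) = v (x T) - v (x 0) := by
  classical
  have hxd : ∀ a b, 0 ≤ a → a ≤ b → b ≤ T → ‖x b - x a‖ ≤ C * (b - a) := by
    intro a b ha hab hbT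
    rw [hinc a b ha hab hbT]
    have hsub : Ioc a b ⊆ Icc 0 T := fun s hs => ⟨ha.trans hs.1.le, hs.2.trans hbT⟩
    calc ‖∫ s in Ioc a b, g s‖ ≤ C * (volume (Ioc a b)).toReal :=
          norm_setIntegral_le_of_norm_le_const (by simp [Real.volume_Ioc])
            (fun s hs => hgC s (hsub hs))
      _ = C * (b - a) := by rw [Real.volume_Ioc, ENNReal.toReal_ofReal (by linarith)]
  set Kimg := x '' Icc 0 T with hKimg
  have hKimgc : IsCompact Kimg := isCompact_Icc.image_of_continuousOn hxc
  obtain ⟨R, hR⟩ := hKimgc.isBounded.subset_closedBall 0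
  set K := Metric.closedBall (0 : EuclideanSpace ℝ (Fin n)) R with hK
  have hKc : IsCompact K := isCompact_closedBall 0 R
  have hKconv : Convex ℝ K := convex_closedBall 0 R
  have hxK : ∀ s ∈ Icc 0 T, x s ∈ K := fun s hs => hR (mem_image_of_mem x hs)
  have hd : Continuous (fderiv ℝ v) := hv.continuous_fderiv one_ne_zero
  obtain ⟨M, hM⟩ := hKc.exists_bound_of_continuousOn hd.continuousOn
  set h : ℝ → ℝ := fun s => (fderiv ℝ v (x s)) (g s) with hh_def
  have hh : IntegrableOn h (Icc 0 T) volume := by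
    have h1 : AEStronglyMeasurable (fun s => fderiv ℝ v (x s))
        (volume.restrict (Icc 0 T)) :=
      (hd.comp_continuousOn hxc).aestronglyMeasurable measurableSet_Icc
    have h2 := hg.1
    have hmeas : AEStronglyMeasurable h (volume.restrict (Icc 0 T)) :=
      isBoundedBilinearMap_apply.continuous.comp_aestronglyMeasurable (h1.prodMk h2)
    refine Integrable.mono' (g := fun _ => M * C)
      (integrableOn_const (by simp [Real.volume_Icc])) hmeas ?_
    refine (ae_restrict_iff' measurableSet_Icc).mpr (ae_of_all _ fun s hs => ?_)
    calc ‖h s‖ ≤ ‖fderiv ℝ v (x s)‖ * ‖g s‖ := ContinuousLinearMap.le_opNorm _ _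
      _ ≤ M * C := mul_le_mul (hM _ (hxK s hs)) (hgC s hs) (norm_nonneg _)
          ((norm_nonneg _).trans (hM _ (hxK s hs)))
  have hIt : ∀ a b, 0 ≤ a → a ≤ b → b ≤ T →
      (∫ s in Icc 0 b, h s) - (∫ s in Icc 0 a, h s) = ∫ s in Ioc a b, h s := by
    intro a b ha hab hbT
    have hsplit : ∫ s in Icc 0 b, h s = (∫ s in Icc 0 a, h s) + ∫ s in Ioc a b, h s := by
      rw [← setIntegral_union ((Iic_disjoint_Ioc le_rfl).mono Icc_subset_Iic_self le_rfl)
        measurableSet_Ioc (hh.mono_set (Icc_subset_Icc_right (hab.trans hbT)))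
        (hh.mono_set fun s hs => ⟨ha.trans hs.1.le, hs.2.trans hbT⟩),
        Icc_union_Ioc_eq_Icc ha hab]
    rw [hsplit]; ring
  rcases eq_or_lt_of_le hT with hT0 | hTpos
  · have hT0' : T = 0 := hT0.symm
    subst hT0'
    have hz : volume.restrict (Icc (0:ℝ) 0) = 0 := by
      rw [Measure.restrict_eq_zero, Icc_self]; exact measure_singleton 0
    rw [hz]
    simp
  suffices H : ∀ ε > 0, ‖(v (x T) - v (x 0)) - ∫ s in Icc 0 T, h s‖ ≤ ε * (2 * C * T) by
    by_contra hne
    set D := (v (x T) - v (x 0)) - ∫ s in Icc 0 T, h s with hD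
    have hDpos : 0 < ‖D‖ := by
      rw [norm_pos_iff, hD, sub_ne_zero]
      exact fun hc => hne hc.symm
    have hden : 0 < 2 * C * T := by positivity
    have := H (‖D‖ / (2 * (2 * C * T))) (by positivity)
    rw [div_mul_eq_mul_div, mul_comm] at this
    have : ‖D‖ ≤ ‖D‖ / 2 := by
      calc ‖D‖ ≤ 2 * C * T * ‖D‖ / (2 * (2 * C * T)) := this
        _ = ‖D‖ / 2 := by field_simp
    linarith
  intro ε hε
  have hucont := hKc.uniformContinuousOn_of_continuous hd.continuousOn
  rw [Metric.uniformContinuousOn_iff] at hucont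
  obtain ⟨δ, hδ, hδε⟩ := hucont ε hε
  obtain ⟨N0, hN0⟩ := exists_nat_gt (T * C / δ)
  set N : ℕ := N0 + 1 with hN
  have hNpos : 0 < (N : ℝ) := by positivity
  have hstep : T * C / N < δ := by
    rw [div_lt_iff₀ hNpos]
    have h1 : T * C / δ < (N : ℝ) := by
      calc T * C / δ < (N0 : ℝ) := hN0
        _ ≤ (N : ℝ) := by exact_mod_cast Nat.le_succ N0
    calc T * C = (T * C / δ) * δ := by field_simp
      _ < (N : ℝ) * δ := by
          apply mul_lt_mul_of_pos_right h1 hδ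
      _ = δ * N := by ring
  set t : ℕ → ℝ := fun i => i * (T / N) with ht_def
  have htmem : ∀ i : ℕ, i ≤ N → t i ∈ Icc 0 T := by
    intro i hi
    constructor
    · positivity
    · have : (i : ℝ) ≤ (N : ℝ) := by exact_mod_cast hi
      calc (i : ℝ) * (T / N) ≤ (N : ℝ) * (T / N) :=
            mul_le_mul_of_nonneg_right this (by positivity)
        _ = T := by field_simp
  have htN : t N = T := by
    simp only [ht_def]; field_simp
  have ht0 : t 0 = 0 := by simp [ht_def]
  -- key increment bound
  have key : ∀ a b, 0 ≤ a → a ≤ b → b ≤ T → C * (b - a) < δ →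
      ‖(v (x b) - ∫ s in Icc 0 b, h s) - (v (x a) - ∫ s in Icc 0 a, h s)‖
        ≤ 2 * ε * C * (b - a) := by
    intro a b ha hab hbT hsmall
    have ha' : a ∈ Icc 0 T := ⟨ha, hab.trans hbT⟩
    have hb' : b ∈ Icc 0 T := ⟨ha.trans hab, hbT⟩
    have hsub : Ioc a b ⊆ Icc 0 T := fun s hs => ⟨ha.trans hs.1.le, hs.2.trans hbT⟩
    set L := fderiv ℝ v (x a) with hL
    have hxab : x b - x a = ∫ s in Ioc a b, g s := hinc a b ha hab hbT
    have hgab : IntegrableOn g (Ioc a b) volume := hg.mono_set hsub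
    have e1 : L (x b - x a) = ∫ s in Ioc a b, L (g s) := by
      rw [hxab]
      exact (ContinuousLinearMap.integral_comp_comm L hgab).symm
    have hLh : IntegrableOn (fun s => L (g s)) (Ioc a b) volume :=
      ContinuousLinearMap.integrable_comp L hgab
    have hhab : IntegrableOn h (Ioc a b) volume := hh.mono_set hsub
    have e2 : ∫ s in Ioc a b, (L (g s) - h s) = L (x b - x a) - ∫ s in Ioc a b, h s := by
      rw [integral_sub hLh hhab, ← e1]
    have hre : (v (x b) - ∫ s in Icc 0 b, h s) - (v (x a) - ∫ s in Icc 0 a, h s)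
        = (v (x b) - v (x a) - L (x b - x a)) + ∫ s in Ioc a b, (L (g s) - h s) := by
      have h3 := hIt a b ha hab hbT
      rw [e2]
      linarith
    rw [hre]
    have bound1 : ‖v (x b) - v (x a) - L (x b - x a)‖ ≤ ε * (C * (b - a)) := by
      set seg := segment ℝ (x a) (x b) with hseg
      have hsegK : seg ⊆ K := hKconv.segment_subset (hxK a ha') (hxK b hb')
      have hder : ∀ y ∈ seg, HasFDerivWithinAt (fun y => v y - L y)
          (fderiv ℝ v y - L) seg y := fun y _ =>
        (((hv.differentiable one_ne_zero) y).hasFDerivAt.sub L.hasFDerivAt).hasFDerivWithinAt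
      have hbound : ∀ y ∈ seg, ‖fderiv ℝ v y - L‖ ≤ ε := by
        intro y hy
        have hyK : y ∈ K := hsegK hy
        have h1 : dist (x a) y + dist y (x b) = dist (x a) (x b) :=
          dist_add_dist_of_mem_segment hy
        have h2 : dist (x a) (x b) ≤ C * (b - a) := by
          rw [dist_eq_norm']
          exact hxd a b ha hab hbT
        have hdisty : dist y (x a) < δ := by
          have := dist_nonneg (x := y) (y := x b)
          calc dist y (x a) = dist (x a) y := dist_comm _ _
            _ ≤ dist (x a) (x b) := by linarith
            _ ≤ C * (b - a) := h2
            _ < δ := hsmall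
        have := hδε y hyK (x a) (hxK a ha') hdisty
        rw [dist_eq_norm] at this
        exact this.le
      have hmvt := (convex_segment (x a) (x b)).norm_image_sub_le_of_norm_hasFDerivWithin_le
        hder hbound (left_mem_segment ℝ (x a) (x b)) (right_mem_segment ℝ (x a) (x b))
      have hrw : v (x b) - L (x b) - (v (x a) - L (x a)) = v (x b) - v (x a) - L (x b - x a) := by
        rw [map_sub]; ring
      calc ‖v (x b) - v (x a) - L (x b - x a)‖
          = ‖v (x b) - L (x b) - (v (x a) - L (x a))‖ := by rw [hrw]
        _ ≤ ε * ‖x b - x a‖ := hmvt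
        _ ≤ ε * (C * (b - a)) :=
            mul_le_mul_of_nonneg_left (hxd a b ha hab hbT) hε.le
    have bound2 : ‖∫ s in Ioc a b, (L (g s) - h s)‖ ≤ ε * C * (b - a) := by
      have hptw : ∀ s ∈ Ioc a b, ‖L (g s) - h s‖ ≤ ε * C := by
        intro s hs
        have hsI : s ∈ Icc 0 T := hsub hs
        have hLs : L (g s) - h s = (L - fderiv ℝ v (x s)) (g s) := by
          simp [hh_def, ContinuousLinearMap.sub_apply]
        rw [hLs]
        have hdists : dist (x s) (x a) < δ := by
          rw [dist_eq_norm]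
          calc ‖x s - x a‖ ≤ C * (s - a) := hxd a s ha hs.1.le hsI.2
            _ ≤ C * (b - a) := mul_le_mul_of_nonneg_left (by linarith [hs.2]) hCpos.le
            _ < δ := hsmall
        have hnorm : ‖L - fderiv ℝ v (x s)‖ ≤ ε := by
          have := hδε (x a) (hxK a ha') (x s) (hxK s hsI) (by rw [dist_comm]; exact hdists)
          rw [dist_eq_norm] at this
          exact this.le
        calc ‖(L - fderiv ℝ v (x s)) (g s)‖ ≤ ‖L - fderiv ℝ v (x s)‖ * ‖g s‖ :=
              ContinuousLinearMap.le_opNorm _ _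
          _ ≤ ε * C := mul_le_mul hnorm (hgC s hsI) (norm_nonneg _) hε.le
      calc ‖∫ s in Ioc a b, (L (g s) - h s)‖ ≤ (ε * C) * (volume (Ioc a b)).toReal :=
            norm_setIntegral_le_of_norm_le_const (by simp [Real.volume_Ioc]) hptw
        _ = ε * C * (b - a) := by rw [Real.volume_Ioc, ENNReal.toReal_ofReal (by linarith)]
    calc ‖(v (x b) - v (x a) - L (x b - x a)) + ∫ s in Ioc a b, (L (g s) - h s)‖
        ≤ ‖v (x b) - v (x a) - L (x b - x a)‖ + ‖∫ s in Ioc a b, (L (g s) - h s)‖ :=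
          norm_add_le _ _
      _ ≤ ε * (C * (b - a)) + ε * C * (b - a) := add_le_add bound1 bound2
      _ = 2 * ε * C * (b - a) := by ring
  -- telescoping
  set ψ : ℕ → ℝ := fun i => v (x (t i)) - ∫ s in Icc 0 (t i), h s with hψ
  have htel : ∑ i ∈ Finset.range N, (ψ (i + 1) - ψ i) = ψ N - ψ 0 := Finset.sum_range_sub ψ N
  have hψN : ψ N = v (x T) - ∫ s in Icc 0 T, h s := by rw [hψ]; simp only [htN]
  have hψ0 : ψ 0 = v (x 0) := by
    have hz : volume.restrict (Icc (0:ℝ) 0) = 0 := by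
      rw [Measure.restrict_eq_zero, Icc_self]; exact measure_singleton 0
    simp only [hψ, ht0, hz, integral_zero_measure, sub_zero]
  have hterm : ∀ i ∈ Finset.range N, ‖ψ (i + 1) - ψ i‖ ≤ 2 * ε * C * (T / N) := by
    intro i hi
    rw [Finset.mem_range] at hi
    have hi1 : (i : ℝ) + 1 ≤ (N : ℝ) := by exact_mod_cast hi
    have ha := htmem i hi.le
    have hb := htmem (i + 1) hi
    have hablt : t i ≤ t (i + 1) := by
      have h0 : (0:ℝ) ≤ T / N := by positivity
      simp only [ht_def]
      exact mul_le_mul_of_nonneg_right (by push_cast; linarith) h0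
    have hdiff : t (i + 1) - t i = T / N := by
      simp only [ht_def]; push_cast; ring
    have hsm : C * (t (i + 1) - t i) < δ := by
      rw [hdiff]
      calc C * (T / N) = T * C / N := by ring
        _ < δ := hstep
    have := key (t i) (t (i + 1)) ha.1 hablt hb.2 hsm
    rw [hdiff] at this
    exact this
  calc ‖(v (x T) - v (x 0)) - ∫ s in Icc 0 T, h s‖
      = ‖∑ i ∈ Finset.range N, (ψ (i + 1) - ψ i)‖ := by
        rw [htel, hψN, hψ0]; ring_nf
    _ ≤ ∑ i ∈ Finset.range N, ‖ψ (i + 1) - ψ i‖ := norm_sum_le _ _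
    _ ≤ ∑ _i ∈ Finset.range N, 2 * ε * C * (T / N) := Finset.sum_le_sum hterm
    _ = N * (2 * ε * C * (T / N)) := by
        rw [Finset.sum_const, Finset.card_range]; simp [nsmul_eq_mul]
    _ = ε * (2 * C * T) := by field_simp

lemma stepA {X XT : Set (EuclideanSpace ℝ (Fin n))} {U : Set (EuclideanSpace ℝ (Fin m))}
    (hX : IsCompact X) (hU : IsCompact U)
    {f : EuclideanSpace ℝ (Fin n) × EuclideanSpace ℝ (Fin m) → EuclideanSpace ℝ (Fin n)}
    (hf : Continuous f) {C : ℝ} (hC : ∀ p ∈ X ×ˢ U, ‖f p‖ ≤ C) (hCpos : 0 < C)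
    {L : EuclideanSpace ℝ (Fin n) × EuclideanSpace ℝ (Fin m) → ℝ} (hL : Continuous L)
    {v : EuclideanSpace ℝ (Fin n) → ℝ} (hv : ContDiff ℝ 1 v)
    {ε TM : ℝ} (hε : 0 < ε)
    (h3 : ∀ p ∈ X ×ˢ U, 0 ≤ L p + fderiv ℝ v p.1 (f p) + ε)
    (h5 : ∀ p ∈ XT, v p ≤ 0)
    {S : ℝ} (hS0 : 0 ≤ S) (hSTM : S ≤ TM)
    {x : ℝ → EuclideanSpace ℝ (Fin n)} {u : ℝ → EuclideanSpace ℝ (Fin m)}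
    (hu : Measurable u) (hxS : x S ∈ XT)
    (hmem : ∀ t ∈ Icc 0 S, x t ∈ X ∧ u t ∈ U)
    (hx : ∀ t ∈ Icc 0 S, x t = x 0 + ∫ s in Icc 0 t, f (x s, u s)) :
    v (x 0) - ε * TM ≤ ∫ t in Icc 0 S, L (x t, u t) := by
  obtain ⟨hgint, hinc, hxc⟩ := traj_basic hf hC hCpos hS0 hu hmem hx
  have hftc : ∫ t in Icc 0 S, (fderiv ℝ v (x t)) (f (x t, u t)) = v (x S) - v (x 0) :=
    ftc_traj hv hS0 hCpos hgint
      (fun s hs => hC _ (mk_mem_prod (hmem s hs).1 (hmem s hs).2)) hxc hinc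
  set Ψ : EuclideanSpace ℝ (Fin n) × EuclideanSpace ℝ (Fin m) → ℝ :=
    fun p => fderiv ℝ v p.1 (f p) with hΨ
  have hΨc : Continuous Ψ := by
    have hpair : Continuous fun p : EuclideanSpace ℝ (Fin n) × EuclideanSpace ℝ (Fin m) =>
        (fderiv ℝ v p.1, f p) :=
      ((hv.continuous_fderiv one_ne_zero).comp continuous_fst).prodMk hf
    exact isBoundedBilinearMap_apply.continuous.comp hpair
  have hLint := integrableOn_comp_traj hX hU hxc hu hmem hL
  have hΨint := integrableOn_comp_traj hX hU hxc hu hmem hΨc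
  have hnonneg : 0 ≤ ∫ t in Icc 0 S, (L (x t, u t) + Ψ (x t, u t) + ε) :=
    setIntegral_nonneg measurableSet_Icc fun t ht =>
      h3 _ (mk_mem_prod (hmem t ht).1 (hmem t ht).2)
  have hconst : IntegrableOn (fun _ : ℝ => ε) (Icc 0 S) volume :=
    integrableOn_const (by simp [Real.volume_Icc])
  have hsum : ∫ t in Icc 0 S, (L (x t, u t) + Ψ (x t, u t) + ε)
      = (∫ t in Icc 0 S, L (x t, u t)) + (v (x S) - v (x 0)) + ε * S := by
    have e1 : ∫ t in Icc 0 S, (L (x t, u t) + Ψ (x t, u t) + ε)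
        = (∫ t in Icc 0 S, (L (x t, u t) + Ψ (x t, u t))) + ∫ _ in Icc 0 S, ε :=
      integral_add (hLint.add hΨint) hconst
    have e2 : ∫ t in Icc 0 S, (L (x t, u t) + Ψ (x t, u t))
        = (∫ t in Icc 0 S, L (x t, u t)) + ∫ t in Icc 0 S, Ψ (x t, u t) :=
      integral_add hLint hΨint
    rw [e1, e2]
    have hc : ∫ _ in Icc 0 S, ε = ε * S := by
      rw [setIntegral_const, smul_eq_mul, Measure.real, Real.volume_Icc,
        ENNReal.toReal_ofReal (by linarith), sub_zero, mul_comm]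
    rw [hc]
    have : ∫ t in Icc 0 S, Ψ (x t, u t) = v (x S) - v (x 0) := hftc
    rw [this]
  rw [hsum] at hnonneg
  have hvS : v (x S) ≤ 0 := h5 _ hxS
  nlinarith [mul_le_mul_of_nonneg_left hSTM hε.le]


lemma integrable_integral_compProd' {α β E : Type*} [MeasurableSpace α] [MeasurableSpace β]
    [NormedAddCommGroup E] [NormedSpace ℝ E] {μ : Measure α} [SFinite μ]
    {κ : ProbabilityTheory.Kernel α β} [ProbabilityTheory.IsSFiniteKernel κ] {f : α × β → E}
    (hf : Integrable f (μ.compProd κ)) :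
    Integrable (fun x => ∫ y, f (x, y) ∂κ x) μ := by
  rw [Measure.compProd] at hf
  simpa using hf.integral_compProd

end auxlemmas

/-- If the occupation/terminal measures come from a superposition of
classical trajectories and `l ∈ IOCP(μ, μT)`, then for `μ0`-almost every initial condition
`z` the given trajectory from `z` is optimal among all admissible trajectories from `z`
with free terminal time in `[0, T_M]`. -/
theorem stmt_9 {n m : ℕ}
    (X X0 XT : Set (EuclideanSpace ℝ (Fin n))) (U : Set (EuclideanSpace ℝ (Fin m)))
    (hX : IsCompact X) (hU : IsCompact U) (hXT : IsCompact XT)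
    (hXTX : XT ⊆ X) (hX0 : X0 ⊆ X)
    (f : EuclideanSpace ℝ (Fin n) × EuclideanSpace ℝ (Fin m) → EuclideanSpace ℝ (Fin n))
    (hf : Continuous f)
    (TM : ℝ) (hTM : 0 < TM)
    (μ0 : Measure (EuclideanSpace ℝ (Fin n))) [IsProbabilityMeasure μ0]
    (hμ0 : μ0 (X0ᶜ) = 0)
    (Tz : EuclideanSpace ℝ (Fin n) → ℝ)
    (xz : EuclideanSpace ℝ (Fin n) → ℝ → EuclideanSpace ℝ (Fin n))
    (uz : EuclideanSpace ℝ (Fin n) → ℝ → EuclideanSpace ℝ (Fin m))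
    (hTz : Measurable Tz)
    (hmeas : Measurable
      (fun p : EuclideanSpace ℝ (Fin n) × ℝ => (xz p.1 p.2, uz p.1 p.2)))
    (htraj : ∀ z ∈ msupport μ0,
      Tz z ∈ Set.Icc 0 TM ∧ xz z 0 = z ∧ xz z (Tz z) ∈ XT ∧
      (∀ t ∈ Set.Icc 0 (Tz z), xz z t ∈ X ∧ uz z t ∈ U) ∧
      (∀ t ∈ Set.Icc 0 (Tz z), xz z t = z + ∫ s in Set.Icc 0 t, f (xz z s, uz z s)))
    (μ : Measure (EuclideanSpace ℝ (Fin n) × EuclideanSpace ℝ (Fin m)))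
    (μT : Measure (EuclideanSpace ℝ (Fin n)))
    (hμ : ∀ A B, MeasurableSet A → MeasurableSet B →
      μ (A ×ˢ B) =
        ∫⁻ z, volume {t | t ∈ Set.Icc 0 (Tz z) ∧ xz z t ∈ A ∧ uz z t ∈ B} ∂μ0)
    (hμT : ∀ A, MeasurableSet A → μT A = μ0 {z | xz z (Tz z) ∈ A})
    (l : EuclideanSpace ℝ (Fin n) × EuclideanSpace ℝ (Fin m) → ℝ)
    (hl : l ∈ IOCP X U XT f μ μT) :
    ∀ᵐ z ∂μ0, ∀ S ∈ Set.Icc (0:ℝ) TM,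
      ∀ (xt : ℝ → EuclideanSpace ℝ (Fin n)) (ut : ℝ → EuclideanSpace ℝ (Fin m)),
        Measurable ut →
        xt 0 = z → xt S ∈ XT →
        (∀ t ∈ Set.Icc 0 S, xt t ∈ X ∧ ut t ∈ U) →
        (∀ t ∈ Set.Icc 0 S, xt t = z + ∫ s in Set.Icc 0 t, f (xt s, ut s)) →
        ∫ t in Set.Icc 0 (Tz z), l (xz z t, uz z t) ≤ ∫ t in Set.Icc 0 S, l (xt t, ut t) := by
  classical
  obtain ⟨hlc, hcert⟩ := hl
  -- Tietze extension of l
  obtain ⟨Lc, hLc⟩ := ContinuousMap.exists_restrict_eq (Y := ℝ) (hX.prod hU).isClosed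
    ⟨(X ×ˢ U).restrict l, hlc.restrict⟩
  set L : EuclideanSpace ℝ (Fin n) × EuclideanSpace ℝ (Fin m) → ℝ := ⇑Lc with hLdef
  have hLcont : Continuous L := Lc.continuous
  have hLeq : ∀ p ∈ X ×ˢ U, L p = l p := by
    intro p hp
    have := congrArg (fun F : C(↥(X ×ˢ U), ℝ) => F ⟨p, hp⟩) hLc
    exact this
  -- bound on f
  obtain ⟨C0, hC0⟩ := (hX.prod hU).exists_bound_of_continuousOn hf.continuousOn
  set C : ℝ := max C0 1 with hCdef
  have hCpos : 0 < C := lt_of_lt_of_le zero_lt_one (le_max_right _ _)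
  have hC : ∀ p ∈ X ×ˢ U, ‖f p‖ ≤ C := fun p hp => (hC0 p hp).trans (le_max_left _ _)
  -- geometric sequences
  set d : ℕ → ℝ := fun k => (2:ℝ)⁻¹ ^ k with hddef
  set e : ℕ → ℝ := fun k => (4:ℝ)⁻¹ ^ k with hedef
  have hdpos : ∀ k, 0 < d k := fun k => by positivity
  have hepos : ∀ k, 0 < e k := fun k => by positivity
  have hed : ∀ k, e k = d k * d k := by
    intro k
    simp only [hddef, hedef, ← mul_pow]
    norm_num
  -- certificates
  choose vk hvk1 hvk2 hvk3 hvk4 hvk5 using fun k : ℕ => hcert (e k) (hepos k)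
  have hvkc : ∀ k, Continuous (vk k) := fun k => (hvk1 k).continuous
  -- support
  have hsupp : ∀ᵐ z ∂μ0, z ∈ msupport μ0 := by
    rw [ae_iff]
    exact msupport_compl_null μ0
  -- measurability of sections
  have hΦz : ∀ z, Measurable (fun t => (xz z t, uz z t)) := fun z =>
    hmeas.comp (measurable_const.prodMk measurable_id)
  have huz : ∀ z, Measurable (uz z) := fun z => (hΦz z).snd
  have hσ : Measurable (fun z => xz z (Tz z)) :=
    (hmeas.comp (measurable_id.prodMk hTz)).fst
  -- μT as a pushforward
  have hμTmap : μT = Measure.map (fun z => xz z (Tz z)) μ0 := by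
    refine Measure.ext fun A hA => ?_
    rw [hμT A hA, Measure.map_apply hσ hA]
    rfl
  -- the kernel
  set T' : EuclideanSpace ℝ (Fin n) → ℝ := fun z => min (Tz z) TM with hT'def
  have hT'm : Measurable T' := hTz.min measurable_const
  have hκm : Measurable (fun z => volume.restrict (Icc 0 (T' z)) :
      EuclideanSpace ℝ (Fin n) → Measure ℝ) := by
    refine Measure.measurable_of_measurable_coe _ fun s hs => ?_
    simp_rw [Measure.restrict_apply hs]
    have hmono : Monotone fun r : ℝ => volume (s ∩ Icc 0 r) := fun r1 r2 h12 =>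
      measure_mono (inter_subset_inter_right _ (Icc_subset_Icc_right h12))
    exact hmono.measurable.comp hT'm
  set κ : ProbabilityTheory.Kernel (EuclideanSpace ℝ (Fin n)) ℝ := ⟨_, hκm⟩ with hκdef
  have hκapp : ∀ z, κ z = volume.restrict (Icc 0 (T' z)) := fun z => rfl
  haveI : ProbabilityTheory.IsFiniteKernel κ := by
    refine ⟨⟨ENNReal.ofReal TM, ENNReal.ofReal_lt_top, fun z => ?_⟩⟩
    rw [hκapp, Measure.restrict_apply_univ, Real.volume_Icc, sub_zero]
    exact ENNReal.ofReal_le_ofReal (min_le_right _ _)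
  set M := μ0.compProd κ with hMdef
  -- μ is a finite measure
  have hμuniv : μ univ ≤ ENNReal.ofReal TM := by
    have h2 := hμ univ univ MeasurableSet.univ MeasurableSet.univ
    rw [univ_prod_univ] at h2
    rw [h2]
    have hb : ∀ᵐ z ∂μ0,
        volume {t | t ∈ Icc 0 (Tz z) ∧ xz z t ∈ univ ∧ uz z t ∈ univ}
          ≤ ENNReal.ofReal TM := by
      filter_upwards [hsupp] with z hz
      have h1 := (htraj z hz).1
      calc volume {t | t ∈ Icc 0 (Tz z) ∧ xz z t ∈ univ ∧ uz z t ∈ univ}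
          ≤ volume (Icc 0 (Tz z)) := measure_mono fun t ht => ht.1
        _ = ENNReal.ofReal (Tz z) := by rw [Real.volume_Icc, sub_zero]
        _ ≤ ENNReal.ofReal TM := ENNReal.ofReal_le_ofReal h1.2
    calc ∫⁻ z, volume {t | t ∈ Icc 0 (Tz z) ∧ xz z t ∈ univ ∧ uz z t ∈ univ} ∂μ0
        ≤ ∫⁻ _, ENNReal.ofReal TM ∂μ0 := lintegral_mono_ae hb
      _ = ENNReal.ofReal TM := by rw [lintegral_const, measure_univ, mul_one]
  haveI : IsFiniteMeasure μ := ⟨lt_of_le_of_lt hμuniv ENNReal.ofReal_lt_top⟩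
  -- rectangles
  have hrect : ∀ A B, MeasurableSet A → MeasurableSet B →
      μ (A ×ˢ B) = Measure.map (fun p : EuclideanSpace ℝ (Fin n) × ℝ =>
        (xz p.1 p.2, uz p.1 p.2)) M (A ×ˢ B) := by
    intro A B hA hB
    rw [hμ A B hA hB, Measure.map_apply hmeas (hA.prod hB),
      Measure.compProd_apply (hmeas (hA.prod hB))]
    refine lintegral_congr_ae ?_
    filter_upwards [hsupp] with z hz
    have h1 := (htraj z hz).1
    have hTz' : T' z = Tz z := min_eq_left h1.2
    have hsets : Prod.mk z ⁻¹' ((fun p : EuclideanSpace ℝ (Fin n) × ℝ =>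
        (xz p.1 p.2, uz p.1 p.2)) ⁻¹' (A ×ˢ B)) = (fun t => (xz z t, uz z t)) ⁻¹' (A ×ˢ B) := rfl
    rw [hκapp z, hsets, Measure.restrict_apply ((hΦz z) (hA.prod hB)), hTz']
    congr 1
    ext t
    simp only [mem_setOf_eq, mem_inter_iff, mem_preimage, mem_prod]
    tauto
  have hMap : μ = Measure.map (fun p : EuclideanSpace ℝ (Fin n) × ℝ =>
      (xz p.1 p.2, uz p.1 p.2)) M := by
    refine MeasureTheory.ext_of_generate_finite _ generateFrom_prod.symm isPiSystem_prod ?_ ?_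
    · rintro s ⟨A, hA, B, hB, rfl⟩
      exact hrect A B hA hB
    · rw [← univ_prod_univ]
      exact hrect univ univ MeasurableSet.univ MeasurableSet.univ
  -- μ lives on X ×ˢ U
  have hXU : μ ((X ×ˢ U)ᶜ) = 0 := by
    have h1 : μ (X ×ˢ U) = μ univ := by
      have h2 := hμ univ univ MeasurableSet.univ MeasurableSet.univ
      rw [univ_prod_univ] at h2
      rw [hμ X U hX.measurableSet hU.measurableSet, h2]
      refine lintegral_congr_ae ?_
      filter_upwards [hsupp] with z hz
      congr 1
      ext t
      simp only [mem_setOf_eq, mem_univ, and_true, true_and]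
      constructor
      · exact fun ht => ht.1
      · intro ht
        exact ⟨ht, ((htraj z hz).2.2.2.1 t ht).1, ((htraj z hz).2.2.2.1 t ht).2⟩
    rw [measure_compl (hX.prod hU).measurableSet (measure_ne_top μ _), h1, tsub_self]
  have hμae : ∀ᵐ p ∂μ, p ∈ X ×ˢ U := by
    rw [ae_iff]
    exact hXU
  have hMae : ∀ᵐ p ∂M, (xz p.1 p.2, uz p.1 p.2) ∈ X ×ˢ U := by
    rw [ae_iff]
    have : {p : EuclideanSpace ℝ (Fin n) × ℝ | ¬ (xz p.1 p.2, uz p.1 p.2) ∈ X ×ˢ U}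
        = (fun p : EuclideanSpace ℝ (Fin n) × ℝ => (xz p.1 p.2, uz p.1 p.2)) ⁻¹'
          ((X ×ˢ U)ᶜ) := rfl
    rw [this, ← Measure.map_apply hmeas (hX.prod hU).measurableSet.compl, ← hMap]
    exact hXU
  -- trajectory cost
  set I : EuclideanSpace ℝ (Fin n) → ℝ :=
    fun z => ∫ t in Icc 0 (Tz z), L (xz z t, uz z t) with hIdef
  set Ψ : ℕ → EuclideanSpace ℝ (Fin n) × EuclideanSpace ℝ (Fin m) → ℝ :=
    fun k p => L p + fderiv ℝ (vk k) p.1 (f p) with hΨdef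
  have hΨc : ∀ k, Continuous (Ψ k) := by
    intro k
    have hpair : Continuous fun p : EuclideanSpace ℝ (Fin n) × EuclideanSpace ℝ (Fin m) =>
        (fderiv ℝ (vk k) p.1, f p) :=
      (((hvk1 k).continuous_fderiv one_ne_zero).comp continuous_fst).prodMk hf
    exact hLcont.add (isBoundedBilinearMap_apply.continuous.comp hpair)
  set Θ : ℕ → EuclideanSpace ℝ (Fin n) → ℝ :=
    fun k z => ∫ t in Icc 0 (T' z), Ψ k (xz z t, uz z t) with hΘdef
  set vT : ℕ → EuclideanSpace ℝ (Fin n) → ℝ := fun k z => vk k (xz z (Tz z)) with hvTdef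
  have hΨM : ∀ k, Integrable (fun p : EuclideanSpace ℝ (Fin n) × ℝ =>
      Ψ k (xz p.1 p.2, uz p.1 p.2)) M := by
    intro k
    obtain ⟨Bk, hBk⟩ := (hX.prod hU).exists_bound_of_continuousOn (hΨc k).continuousOn
    refine Integrable.mono' (g := fun _ => Bk) (integrable_const _)
      (((hΨc k).measurable.comp hmeas).aestronglyMeasurable) ?_
    filter_upwards [hMae] with p hp
    exact hBk _ hp
  have hΘκ : ∀ k z, Θ k z = ∫ t, Ψ k (xz z t, uz z t) ∂(κ z) := by
    intro k z
    rw [hκapp]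
  have hFub : ∀ k, ∫ z, Θ k z ∂μ0 = ∫ p, Ψ k p ∂μ := by
    intro k
    rw [hMap, integral_map hmeas.aemeasurable ((hΨc k).aestronglyMeasurable),
      Measure.integral_compProd (hΨM k)]
    exact integral_congr_ae (Filter.Eventually.of_forall fun z => hΘκ k z)
  have hΘle : ∀ k, ∫ z, Θ k z ∂μ0 ≤ e k := by
    intro k
    rw [hFub k]
    have hcongr : ∫ p, Ψ k p ∂μ = ∫ p, (l p + fderiv ℝ (vk k) p.1 (f p)) ∂μ := by
      refine integral_congr_ae ?_
      filter_upwards [hμae] with p hp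
      simp only [hΨdef]
      rw [hLeq p hp]
    rw [hcongr]
    exact hvk2 k
  have hΘint : ∀ k, Integrable (Θ k) μ0 := by
    intro k
    have h1 := integrable_integral_compProd' (hΨM k)
    exact (integrable_congr (Filter.Eventually.of_forall fun z => (hΘκ k z).symm)).mp h1
  have hvTint : ∀ k, Integrable (vT k) μ0 := by
    intro k
    obtain ⟨Bk, hBk⟩ := hXT.exists_bound_of_continuousOn (hvkc k).continuousOn
    refine Integrable.mono' (g := fun _ => Bk) (integrable_const _)
      (((hvkc k).measurable.comp hσ).aestronglyMeasurable) ?_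
    filter_upwards [hsupp] with z hz
    exact hBk _ ((htraj z hz).2.2.1)
  have hvTge : ∀ k, -e k ≤ ∫ z, vT k z ∂μ0 := by
    intro k
    have h4 := hvk4 k
    rw [hμTmap, integral_map hσ.aemeasurable ((hvkc k).aestronglyMeasurable)] at h4
    exact h4
  set G : ℕ → EuclideanSpace ℝ (Fin n) → ℝ := fun k z => Θ k z - vT k z with hGdef
  have hGint : ∀ k, Integrable (G k) μ0 := fun k => (hΘint k).sub (hvTint k)
  have hGle : ∀ k, ∫ z, G k z ∂μ0 ≤ 2 * e k := by
    intro k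
    have hsub : ∫ z, G k z ∂μ0 = (∫ z, Θ k z ∂μ0) - ∫ z, vT k z ∂μ0 :=
      integral_sub (hΘint k) (hvTint k)
    rw [hsub]
    have h1 := hΘle k
    have h2 := hvTge k
    linarith
  -- pointwise identities on the support
  have hptwise : ∀ z ∈ msupport μ0, ∀ k,
      Θ k z = I z + vT k z - vk k z ∧ vk k z - e k * TM ≤ I z := by
    intro z hz k
    obtain ⟨hT1, hx0, hxT, hmem', hxint'⟩ := htraj z hz
    have hxint : ∀ t ∈ Icc 0 (Tz z),
        xz z t = xz z 0 + ∫ s in Icc 0 t, f (xz z s, uz z s) := by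
      intro t ht
      rw [hx0]
      exact hxint' t ht
    obtain ⟨hgint, hinc, hxc⟩ := traj_basic hf hC hCpos hT1.1 (huz z) hmem' hxint
    have hgCm : ∀ s ∈ Icc 0 (Tz z), ‖f (xz z s, uz z s)‖ ≤ C := fun s hs =>
      hC _ (mk_mem_prod (hmem' s hs).1 (hmem' s hs).2)
    have hftc := ftc_traj (hvk1 k) hT1.1 hCpos hgint hgCm hxc hinc
    have hLint := integrableOn_comp_traj hX hU hxc (huz z) hmem' hLcont
    have hfdc : Continuous fun p : EuclideanSpace ℝ (Fin n) × EuclideanSpace ℝ (Fin m) =>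
        fderiv ℝ (vk k) p.1 (f p) := by
      have hpair : Continuous fun p : EuclideanSpace ℝ (Fin n) × EuclideanSpace ℝ (Fin m) =>
          (fderiv ℝ (vk k) p.1, f p) :=
        (((hvk1 k).continuous_fderiv one_ne_zero).comp continuous_fst).prodMk hf
      exact isBoundedBilinearMap_apply.continuous.comp hpair
    have hΨvint := integrableOn_comp_traj hX hU hxc (huz z) hmem' hfdc
    have hTz' : T' z = Tz z := min_eq_left hT1.2
    have h3k : ∀ p ∈ X ×ˢ U, 0 ≤ L p + fderiv ℝ (vk k) p.1 (f p) + e k := by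
      intro p hp
      rw [hLeq p hp]
      exact hvk3 k p hp
    constructor
    · have hΘz : Θ k z = ∫ t in Icc 0 (Tz z), Ψ k (xz z t, uz z t) := by
        rw [hΘdef]
        simp only [hTz']
      rw [hΘz]
      have hadd : ∫ t in Icc 0 (Tz z), Ψ k (xz z t, uz z t)
          = (∫ t in Icc 0 (Tz z), L (xz z t, uz z t))
            + ∫ t in Icc 0 (Tz z), fderiv ℝ (vk k) (xz z t) (f (xz z t, uz z t)) :=
        integral_add hLint hΨvint
      rw [hadd, hftc, hx0]
      simp only [hvTdef, hIdef]
      ring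
    · have hstep := stepA hX hU hf hC hCpos hLcont (hvk1 k) (hepos k) h3k (hvk5 k)
        hT1.1 hT1.2 (huz z) hxT hmem' hxint
      rw [hx0] at hstep
      exact hstep
  -- Markov inequality
  set sk : ℕ → Set (EuclideanSpace ℝ (Fin n)) := fun k => {z | d k ≤ G k z} with hskdef
  have hmark : ∀ k, μ0 (sk k) ≤ ENNReal.ofReal ((2 + TM) * d k) := by
    intro k
    set F : EuclideanSpace ℝ (Fin n) → ℝ := fun z => G k z + e k * TM with hFdef
    have hFnn : 0 ≤ᵐ[μ0] F := by
      filter_upwards [hsupp] with z hz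
      have h1 := (hptwise z hz k).1
      have h2 := (hptwise z hz k).2
      have h3 : G k z = I z - vk k z := by
        simp only [hGdef]
        rw [h1]
        ring
      simp only [hFdef, Pi.zero_apply]
      have h4 : 0 < e k * TM := by positivity
      rw [h3]
      linarith
    have hFint : Integrable F μ0 := (hGint k).add (integrable_const _)
    have hm := mul_meas_ge_le_integral_of_nonneg hFnn hFint (d k + e k * TM)
    have hset : {z | d k + e k * TM ≤ F z} = sk k := by
      ext z
      simp only [hFdef, hskdef, mem_setOf_eq]
      constructor <;> intro h <;> linarith
    rw [hset] at hm
    have hFle : ∫ z, F z ∂μ0 ≤ e k * (2 + TM) := by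
      have hFeq : ∫ z, F z ∂μ0 = (∫ z, G k z ∂μ0) + e k * TM := by
        have h5 := integral_add (hGint k) (integrable_const (e k * TM)) (μ := μ0)
        rw [integral_const, probReal_univ] at h5
        simpa using h5
      rw [hFeq]
      have := hGle k
      linarith
    have hden : 0 < d k + e k * TM := by
      have := hdpos k
      have : 0 < e k * TM := by positivity
      linarith [hdpos k]
    have htoReal : (μ0 (sk k)).toReal ≤ (2 + TM) * d k := by
      have h2 : (μ0 (sk k)).toReal ≤ (e k * (2 + TM)) / (d k + e k * TM) := by
        rw [le_div_iff₀ hden]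
        calc (μ0 (sk k)).toReal * (d k + e k * TM)
            = (d k + e k * TM) * (μ0 (sk k)).toReal := by ring
          _ ≤ ∫ z, F z ∂μ0 := hm
          _ ≤ e k * (2 + TM) := hFle
      have h3 : (e k * (2 + TM)) / (d k + e k * TM) ≤ (e k * (2 + TM)) / d k := by
        refine div_le_div_of_nonneg_left ?_ (hdpos k) ?_
        · positivity
        · have : 0 < e k * TM := by positivity
          linarith
      have h4 : (e k * (2 + TM)) / d k = (2 + TM) * d k := by
        rw [hed k, div_eq_iff (hdpos k).ne']
        ring
      linarith
    calc μ0 (sk k) = ENNReal.ofReal ((μ0 (sk k)).toReal) :=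
          (ENNReal.ofReal_toReal (measure_ne_top μ0 _)).symm
      _ ≤ ENNReal.ofReal ((2 + TM) * d k) := ENNReal.ofReal_le_ofReal htoReal
  have hsum : (∑' k, μ0 (sk k)) ≠ ⊤ := by
    have hle : ∀ k, μ0 (sk k) ≤ ENNReal.ofReal (2 + TM) * (ENNReal.ofReal 2⁻¹) ^ k := by
      intro k
      refine (hmark k).trans_eq ?_
      rw [ENNReal.ofReal_mul (by linarith)]
      congr 1
      simp only [hddef]
      rw [ENNReal.ofReal_pow (by norm_num)]
    refine ne_top_of_le_ne_top ?_ (ENNReal.tsum_le_tsum hle)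
    rw [ENNReal.tsum_mul_left, ENNReal.tsum_geometric]
    refine ENNReal.mul_ne_top ENNReal.ofReal_ne_top ?_
    have hhalf : ENNReal.ofReal 2⁻¹ < 1 := by
      rw [show (1 : ENNReal) = ENNReal.ofReal 1 by simp]
      rw [ENNReal.ofReal_lt_ofReal_iff (by norm_num)]
      norm_num
    exact ENNReal.inv_ne_top.mpr (tsub_pos_of_lt hhalf).ne'
  have hBC := MeasureTheory.ae_eventually_notMem hsum
  -- conclusion
  filter_upwards [hsupp, hBC] with z hz hev
  intro S hS xt ut hut hxt0 hxtS hmemc hxintc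
  have hLHS : ∫ t in Icc 0 (Tz z), l (xz z t, uz z t) = I z := by
    refine setIntegral_congr_fun measurableSet_Icc fun t ht => ?_
    exact (hLeq _ (mk_mem_prod (((htraj z hz).2.2.2.1) t ht).1
      (((htraj z hz).2.2.2.1) t ht).2)).symm
  have hRHS : ∫ t in Icc 0 S, l (xt t, ut t) = ∫ t in Icc 0 S, L (xt t, ut t) := by
    refine setIntegral_congr_fun measurableSet_Icc fun t ht => ?_
    exact (hLeq _ (mk_mem_prod (hmemc t ht).1 (hmemc t ht).2)).symm
  rw [hLHS, hRHS]
  have hxint2 : ∀ t ∈ Icc 0 S, xt t = xt 0 + ∫ s in Icc 0 t, f (xt s, ut s) := by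
    intro t ht
    rw [hxt0]
    exact hxintc t ht
  have hcomp : ∀ k, vk k z - e k * TM ≤ ∫ t in Icc 0 S, L (xt t, ut t) := by
    intro k
    have h3k : ∀ p ∈ X ×ˢ U, 0 ≤ L p + fderiv ℝ (vk k) p.1 (f p) + e k := by
      intro p hp
      rw [hLeq p hp]
      exact hvk3 k p hp
    have hstep := stepA hX hU hf hC hCpos hLcont (hvk1 k) (hepos k) h3k (hvk5 k)
      hS.1 hS.2 hut hxtS hmemc hxint2
    rw [hxt0] at hstep
    exact hstep
  have hIub : ∀ᶠ k in Filter.atTop,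
      I z ≤ (∫ t in Icc 0 S, L (xt t, ut t)) + (d k + e k * TM) := by
    filter_upwards [hev] with k hk
    have hGz : G k z = I z - vk k z := by
      simp only [hGdef]
      rw [(hptwise z hz k).1]
      ring
    have hlt : G k z < d k := by
      by_contra hcon
      push_neg at hcon
      exact hk hcon
    have hck := hcomp k
    rw [hGz] at hlt
    linarith
  have hd0 : Filter.Tendsto d Filter.atTop (nhds 0) := by
    rw [hddef]
    exact tendsto_pow_atTop_nhds_zero_of_lt_one (by norm_num) (by norm_num)
  have he0 : Filter.Tendsto e Filter.atTop (nhds 0) := by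
    rw [hedef]
    exact tendsto_pow_atTop_nhds_zero_of_lt_one (by norm_num) (by norm_num)
  have htend : Filter.Tendsto
      (fun k => (∫ t in Icc 0 S, L (xt t, ut t)) + (d k + e k * TM))
      Filter.atTop (nhds ((∫ t in Icc 0 S, L (xt t, ut t)) + (0 + 0 * TM))) :=
    Filter.Tendsto.const_add _ (hd0.add (he0.mul_const TM))
  have hfin := ge_of_tendsto htend hIub
  simpa using hfin
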